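/- arXiv:1011.5486 — 3 statements merged into one kernel-verified Lean document; each statement's English description precedes it below -/
import Mathlib

section
/- For a discriminant δ and natural number q, define ρ_q(δ) to be the number of residues x mod 2q with x² ≡ δ (mod 4q). Then for any n ≥ 3, ρ_q(n² − 4) = (1/q) · Σ_{k mod q} e(kn/q) S(k, k; q), where S(a,b;q) = Σ_{y mod q, gcd(y,q)=1} e((ay + b·y⁻¹)/q) is the Kloosterman sum and e(t) = exp(2πit). -/
open Finset

/-- `e(t) = exp(2πit)`. -/
noncomputable def eC (t : ℝ) : ℂ := Complex.exp (2 * Real.pi * Complex.I * t)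

/-- Kloosterman sum `S(a,b;c) = Σ_{y mod c, (y,c)=1} e((ay + b y⁻¹)/c)`,
where `y⁻¹` is the inverse of `y` mod `c`. -/
noncomputable def kloos (a b : ℤ) (c : ℕ) : ℂ :=
  ∑ y ∈ (Finset.range c).filter (fun y => Nat.Coprime y c),
    eC ((((a * y + b * ((((y : ZMod c)⁻¹ : ZMod c)).val : ℤ)) : ℤ) : ℝ) / c)

/-- `ρ_q(δ) = #{x mod 2q : x² ≡ δ (mod 4q)}`. -/
def rho (q : ℕ) (δ : ℤ) : ℕ :=
  ((Finset.range (2 * q)).filter (fun x : ℕ => ((x : ℤ) ^ 2) % (4 * q) = δ % (4 * q))).card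

lemma eC_add (a b : ℝ) : eC (a + b) = eC a * eC b := by
  rw [eC, eC, eC, ← Complex.exp_add]
  congr 1
  push_cast
  ring

lemma eC_nat_mul (k : ℕ) (t : ℝ) : eC (k * t) = eC t ^ k := by
  rw [eC, eC, ← Complex.exp_nat_mul]
  congr 1
  push_cast
  ring

lemma eC_int (m : ℤ) : eC m = 1 := by
  rw [eC]
  have : (2 * Real.pi * Complex.I * (m:ℝ) : ℂ) = (m:ℤ) * (2 * Real.pi * Complex.I) := by
    push_cast; ring
  rw [this, Complex.exp_int_mul_two_pi_mul_I]

lemma eC_eq_one_iff (q : ℕ) (hq : 0 < q) (m : ℤ) : eC ((m:ℝ) / q) = 1 ↔ (q:ℤ) ∣ m := by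
  rw [eC, Complex.exp_eq_one_iff]
  have hq' : (q:ℝ) ≠ 0 := Nat.cast_ne_zero.mpr hq.ne'
  have h2 : (2 * Real.pi * Complex.I : ℂ) ≠ 0 := by
    simp [Complex.I_ne_zero, Real.pi_ne_zero]
  constructor
  · rintro ⟨t, ht⟩
    rw [show ((t:ℂ) * (2 * Real.pi * Complex.I)) = 2 * Real.pi * Complex.I * (t:ℂ) by ring]
      at ht
    have h3 : ((((m:ℝ)/q : ℝ)) : ℂ) = (t : ℂ) := mul_left_cancel₀ h2 ht
    have h4 : ((m:ℝ)/q) = (t:ℝ) := by exact_mod_cast h3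
    refine ⟨t, ?_⟩
    field_simp at h4
    have h5 : (m:ℝ) = ((q:ℤ) * t : ℤ) := by push_cast; linarith
    exact_mod_cast h5
  · rintro ⟨c, rfl⟩
    refine ⟨c, ?_⟩
    have h3 : (((q:ℤ) * c : ℤ) : ℝ) / q = (c:ℝ) := by push_cast; field_simp
    rw [h3]; push_cast; ring

lemma sum_eC (q : ℕ) (hq : 0 < q) (m : ℤ) :
    ∑ k ∈ range q, eC (((k * m : ℤ) : ℝ) / q) = if (q:ℤ) ∣ m then (q:ℂ) else 0 := by
  have h1 : ∀ k : ℕ, eC ((((k:ℤ) * m : ℤ) : ℝ) / q) = eC ((m:ℝ) / q) ^ k := by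
    intro k
    rw [← eC_nat_mul]
    congr 1
    push_cast
    ring
  simp_rw [h1]
  by_cases h : (q:ℤ) ∣ m
  · rw [if_pos h, (eC_eq_one_iff q hq m).mpr h]
    simp
  · rw [if_neg h]
    have hz : eC ((m:ℝ)/q) ≠ 1 := fun hc => h ((eC_eq_one_iff q hq m).mp hc)
    rw [geom_sum_eq hz]
    have hpow : eC ((m:ℝ)/q) ^ q = 1 := by
      rw [← eC_nat_mul]
      have : (q:ℝ) * ((m:ℝ)/q) = (m:ℝ) := by
        field_simp
      rw [this]
      exact eC_int m
    simp [hpow]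

lemma cond_iff (q : ℕ) [NeZero q] (n y : ℕ) :
    (Nat.Coprime y q ∧ (q:ℤ) ∣ ((n:ℤ) + y + (((y : ZMod q)⁻¹).val : ℤ)))
      ↔ (q:ℤ) ∣ ((y:ℤ)*y + (n:ℤ)*y + 1) := by
  have hcast1 : ((((n:ℤ) + y + (((y : ZMod q)⁻¹).val : ℤ)) : ℤ) : ZMod q)
      = (n : ZMod q) + (y : ZMod q) + ((y : ZMod q))⁻¹ := by
    push_cast
    rw [ZMod.natCast_val, ZMod.cast_id]
  have hcast2 : ((((y:ℤ)*y + (n:ℤ)*y + 1) : ℤ) : ZMod q)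
      = (y:ZMod q)*(y:ZMod q) + (n:ZMod q)*(y:ZMod q) + 1 := by push_cast; ring
  rw [← ZMod.intCast_zmod_eq_zero_iff_dvd, ← ZMod.intCast_zmod_eq_zero_iff_dvd, hcast1, hcast2,
    ← ZMod.isUnit_iff_coprime]
  constructor
  · rintro ⟨hu, h⟩
    have h1 : (y:ZMod q) * (y:ZMod q)⁻¹ = 1 := ZMod.mul_inv_of_unit _ hu
    linear_combination (y:ZMod q) * h - h1
  · intro h
    have hu : IsUnit (y : ZMod q) :=
      IsUnit.of_mul_eq_one (-((y:ZMod q)+n)) (by linear_combination -h)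
    have h1 : (y:ZMod q) * (y:ZMod q)⁻¹ = 1 := ZMod.mul_inv_of_unit _ hu
    refine ⟨hu, ?_⟩
    have h2 : (y:ZMod q)⁻¹ = -((y:ZMod q)+n) := by
      apply hu.mul_left_cancel
      rw [h1]; linear_combination h
    rw [h2]; ring

lemma sq_modeq (N a b : ℤ) (h : a ≡ b [ZMOD 2*N]) : a^2 ≡ b^2 [ZMOD 4*N] := by
  obtain ⟨t, ht⟩ := h.dvd
  rw [Int.modEq_iff_dvd]
  exact ⟨t*a + N*t^2, by linear_combination (b + a + 2*N*t) * ht⟩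

lemma sq_mod_four (m : ℕ) : ((m:ℤ)^2) % 4 = ((m % 2 : ℕ) : ℤ) := by
  rcases Nat.even_or_odd m with ⟨a, rfl⟩ | ⟨a, rfl⟩
  · have h1 : (((a+a:ℕ):ℤ))^2 = 4*(a:ℤ)^2 := by push_cast; ring
    have h2 : ((a+a) % 2 : ℕ) = 0 := by omega
    rw [h1, h2, Int.mul_emod_right]; rfl
  · have h1 : (((2*a+1:ℕ):ℤ))^2 = 1 + 4*((a:ℤ)^2+a) := by push_cast; ring
    have h2 : ((2*a+1) % 2 : ℕ) = 1 := by omega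
    rw [h1, h2, Int.add_mul_emod_self_left]; rfl

lemma card_lemma (q : ℕ) (hq : 0 < q) (n : ℕ) :
    ((Finset.range q).filter (fun y => Nat.Coprime y q ∧
        (q:ℤ) ∣ ((n:ℤ) + y + (((y : ZMod q)⁻¹).val : ℤ)))).card
      = rho q ((n:ℤ)^2 - 4) := by
  haveI : NeZero q := ⟨hq.ne'⟩
  rw [rho]
  apply Finset.card_bij (fun y _ => (n + 2*y) % (2*q))
  · -- maps to
    intro y hy
    simp only [mem_filter, mem_range] at hy ⊢
    obtain ⟨hyq, hyc⟩ := hy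
    refine ⟨Nat.mod_lt _ (by positivity), ?_⟩
    have hk : (q:ℤ) ∣ ((y:ℤ)*y + (n:ℤ)*y + 1) := (cond_iff q n y).mp hyc
    have h1 : ((((n + 2*y) % (2*q) : ℕ)):ℤ) ≡ ((n:ℤ)+2*y) [ZMOD 2*(q:ℤ)] := by
      rw [Int.natCast_mod]
      push_cast
      exact Int.emod_emod_of_dvd _ dvd_rfl
    have h2 := sq_modeq (q:ℤ) _ _ h1
    have h3 : ((n:ℤ)+2*y)^2 ≡ ((n:ℤ)^2 - 4) [ZMOD 4*(q:ℤ)] := by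
      rw [Int.modEq_iff_dvd]
      obtain ⟨c, hc⟩ := hk
      exact ⟨-c, by linear_combination (-4) * hc⟩
    exact h2.trans h3
  · -- inj
    intro y₁ hy₁ y₂ hy₂ hxy
    simp only [mem_filter, mem_range] at hy₁ hy₂
    have h1 : (((n + 2*y₁) % (2*q) : ℕ) : ℤ) = (((n + 2*y₂) % (2*q) : ℕ) : ℤ) := by
      exact_mod_cast hxy
    rw [Int.natCast_mod, Int.natCast_mod] at h1
    push_cast at h1
    have h2 : ((2:ℤ)*(q:ℤ)) ∣ (((n:ℤ) + 2*y₂) - ((n:ℤ) + 2*y₁)) := Int.ModEq.dvd h1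
    obtain ⟨c, hc⟩ := h2
    have h3 : (y₂:ℤ) - y₁ = q * c := by linarith
    have h4 : (q:ℤ) ∣ ((y₂:ℤ) - y₁) := ⟨c, h3⟩
    have h5 : ((y₁ : ZMod q)) = (y₂ : ZMod q) := by
      have := (ZMod.intCast_zmod_eq_zero_iff_dvd _ q).mpr h4
      push_cast at this
      linear_combination -this
    have := congrArg ZMod.val h5
    rwa [ZMod.val_cast_of_lt hy₁.1, ZMod.val_cast_of_lt hy₂.1] at this
  · -- surj
    intro x hx
    simp only [mem_filter, mem_range] at hx
    obtain ⟨hx2q, hxc⟩ := hx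
    have hmod : ((x:ℤ)^2) ≡ ((n:ℤ)^2 - 4) [ZMOD 4*(q:ℤ)] := hxc
    have h4 : ((x:ℤ)^2) ≡ ((n:ℤ)^2 - 4) [ZMOD 4] := hmod.of_dvd ⟨q, by ring⟩
    have hpar : x % 2 = n % 2 := by
      have hx4 := sq_mod_four x
      have hn4 := sq_mod_four n
      have h5 : ((n:ℤ)^2 - 4) % 4 = ((n:ℤ)^2) % 4 := by
        generalize (n:ℤ)^2 = a; omega
      have h6 : ((x % 2 : ℕ) : ℤ) = ((n % 2 : ℕ) : ℤ) := by
        rw [← hx4, ← hn4, ← h5]; exact h4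
      exact_mod_cast h6
    have h2 : (2:ℤ) ∣ ((x:ℤ) - n) := by omega
    set w : ℤ := ((x:ℤ) - n) / 2 with hw_def
    have hw : 2 * w = (x:ℤ) - n := Int.mul_ediv_cancel' h2
    have hq0 : (0:ℤ) < q := by exact_mod_cast hq
    set z : ℤ := w % q with hz_def
    have hz0 : 0 ≤ z := Int.emod_nonneg w hq0.ne'
    have hzq : z < q := Int.emod_lt_of_pos w hq0
    have hzw : w ≡ z [ZMOD (q:ℤ)] := (Int.emod_emod_of_dvd w dvd_rfl).symm
    obtain ⟨c, hc⟩ := hzw.dvd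
    have htn : (z.toNat : ℤ) = z := Int.toNat_of_nonneg hz0
    have hmodeq : ((n:ℤ) + 2*z) ≡ (x:ℤ) [ZMOD 2*(q:ℤ)] := by
      rw [Int.modEq_iff_dvd]
      exact ⟨-c, by linear_combination (-2) * hc - hw⟩
    have hix : (n + 2*z.toNat) % (2*q) = x := by
      have hint : ((n:ℤ) + 2*z) % (2*(q:ℤ)) = (x:ℤ) := by
        rw [hmodeq]
        exact Int.emod_eq_of_lt (by positivity) (by exact_mod_cast hx2q)
      have : (((n + 2*z.toNat) % (2*q) : ℕ) : ℤ) = ((x:ℕ) : ℤ) := by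
        rw [Int.natCast_mod]
        push_cast [htn]
        exact hint
      exact_mod_cast this
    refine ⟨z.toNat, ?_, hix⟩
    simp only [mem_filter, mem_range]
    have hzq' : z.toNat < q := by omega
    refine ⟨hzq', (cond_iff q n z.toNat).mpr ?_⟩
    have hsq : ((n:ℤ)+2*z.toNat)^2 ≡ ((n:ℤ)^2 - 4) [ZMOD 4*(q:ℤ)] := by
      have := sq_modeq (q:ℤ) _ _ hmodeq
      rw [htn]
      exact this.trans hmod
    rw [Int.modEq_iff_dvd] at hsq
    obtain ⟨d, hd⟩ := hsq
    refine (mul_dvd_mul_iff_left (show (4:ℤ) ≠ 0 by norm_num)).mp ?_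
    exact ⟨-d, by linear_combination -hd⟩

theorem rho_eq_kloosterman_sum (q : ℕ) (hq : 0 < q) (n : ℕ) (hn : 3 ≤ n) :
    (rho q ((n : ℤ) ^ 2 - 4) : ℂ) =
      (1 / (q : ℂ)) * ∑ k ∈ Finset.range q, eC ((k * n : ℕ) / (q : ℝ)) * kloos k k q := by
  haveI : NeZero q := ⟨hq.ne'⟩
  have hstep : ∀ k ∈ Finset.range q, eC ((k * n : ℕ) / (q:ℝ)) * kloos k k q
      = ∑ y ∈ (range q).filter (fun y => Nat.Coprime y q),
          eC ((((k:ℤ) * ((n:ℤ) + y + (((y : ZMod q)⁻¹).val : ℤ)) : ℤ) : ℝ) / q) := by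
    intro k _
    rw [kloos, Finset.mul_sum]
    refine Finset.sum_congr rfl fun y hy => ?_
    rw [← eC_add]
    congr 1
    push_cast
    ring
  rw [Finset.sum_congr rfl hstep, Finset.sum_comm]
  have hinner : ∀ y ∈ (range q).filter (fun y => Nat.Coprime y q),
      (∑ k ∈ range q, eC ((((k:ℤ) * ((n:ℤ) + y + (((y : ZMod q)⁻¹).val : ℤ)) : ℤ):ℝ)/q))
      = if (q:ℤ) ∣ ((n:ℤ) + y + (((y : ZMod q)⁻¹).val : ℤ)) then (q:ℂ) else 0 :=
    fun y _ => sum_eC q hq _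
  rw [Finset.sum_congr rfl hinner, ← Finset.sum_filter, Finset.sum_const, Finset.filter_filter]
  rw [card_lemma q hq n]
  have hqc : (q:ℂ) ≠ 0 := Nat.cast_ne_zero.mpr hq.ne'
  field_simp
  rw [nsmul_eq_mul]
end

section
/- Fix a prime p, a nonnegative integer k, and a real ε with |ε| ≤ 1 (in application ε = χ_D(p)/√p). Define the polynomial p_ε(Z) = Z^{k+1} − ε Z^k + ε Z^{−k} − Z^{−k−1} multiplied through by Z^{k+1}, i.e. P(Z) = Z^{2k+2} − ε Z^{2k+1} + ε Z − 1. Then all roots of P lie on the unit circle |Z| = 1. -/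
theorem roots_on_unit_circle (k : ℕ) (ε : ℝ) (hε : |ε| ≤ 1) (z : ℂ)
    (hz : z ^ (2 * k + 2) - (ε : ℂ) * z ^ (2 * k + 1) + (ε : ℂ) * z - 1 = 0) :
    ‖z‖ = 1 := by
  have heq : z ^ (2 * k + 1) * (z - (ε : ℂ)) = 1 - (ε : ℂ) * z := by
    have h2 : z ^ (2 * k + 2) = z ^ (2 * k + 1) * z := by
      rw [← pow_succ]
    linear_combination hz + h2 - h2
  set r := ‖z‖ with hr
  set a := ‖z - (ε : ℂ)‖ with ha
  set b := ‖1 - (ε : ℂ) * z‖ with hb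
  have habs : r ^ (2 * k + 1) * a = b := by
    rw [hr, ha, hb, ← norm_pow, ← norm_mul, heq]
  have hkey : b ^ 2 - a ^ 2 = (1 - ε ^ 2) * (1 - r ^ 2) := by
    rw [hb, ha, hr, Complex.sq_norm, Complex.sq_norm, Complex.sq_norm]
    simp only [Complex.normSq_apply, Complex.sub_re, Complex.sub_im, Complex.mul_re,
      Complex.mul_im, Complex.one_re, Complex.one_im, Complex.ofReal_re, Complex.ofReal_im]
    ring
  have hε2 : ε ^ 2 ≤ 1 := by nlinarith [sq_abs ε, abs_nonneg ε]
  have hr0 : 0 ≤ r := norm_nonneg z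
  have ha0 : 0 ≤ a := norm_nonneg _
  have hb0 : 0 ≤ b := norm_nonneg _
  rcases lt_trichotomy r 1 with h | h | h
  · exfalso
    have hr2 : r ^ 2 < 1 := by nlinarith
    have hprod : 0 ≤ (1 - ε ^ 2) * (1 - r ^ 2) :=
      mul_nonneg (by linarith) (by linarith)
    have hrn : r ^ (2 * k + 1) ≤ r := by
      calc r ^ (2 * k + 1) ≤ r ^ 1 := pow_le_pow_of_le_one hr0 h.le (by omega)
        _ = r := pow_one r
    have hba : b ≤ r * a := by
      calc b = r ^ (2 * k + 1) * a := habs.symm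
        _ ≤ r * a := by nlinarith
    have haz : a = 0 := by
      by_contra hne
      have hap : 0 < a := lt_of_le_of_ne ha0 (Ne.symm hne)
      nlinarith [pow_le_pow_left₀ hb0 hba 2, mul_pos (mul_pos hap hap)
        (show (0:ℝ) < 1 - r ^ 2 by linarith)]
    have hbz : b = 0 := by rw [haz, mul_zero] at habs; exact habs.symm
    rw [haz, hbz] at hkey
    have h0 : (1 - ε ^ 2) * (1 - r ^ 2) = 0 := by linarith [hkey]
    rcases mul_eq_zero.mp h0 with h' | h'
    · -- ε² = 1 but then z = ε gives r = 1
      have hzε : z = (ε : ℂ) := sub_eq_zero.mp (norm_eq_zero.mp haz)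
      have hre : r = |ε| := by rw [hr, hzε, Complex.norm_real, Real.norm_eq_abs]
      have : r ^ 2 = ε ^ 2 := by rw [hre, sq_abs]
      nlinarith
    · linarith
  · exact h
  · exfalso
    have hr2 : 1 < r ^ 2 := by nlinarith
    have hprod : (1 - ε ^ 2) * (1 - r ^ 2) ≤ 0 :=
      mul_nonpos_of_nonneg_of_nonpos (by linarith) (by linarith)
    have hrn : r ≤ r ^ (2 * k + 1) := le_self_pow₀ h.le (by omega)
    have hagt : r - 1 ≤ a := by
      have htri : r ≤ a + ‖(ε : ℂ)‖ := by
        calc r = ‖(z - (ε : ℂ)) + (ε : ℂ)‖ := by rw [hr]; ring_nf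
          _ ≤ a + ‖(ε : ℂ)‖ := norm_add_le _ _
      have : ‖(ε : ℂ)‖ ≤ 1 := by rw [Complex.norm_real, Real.norm_eq_abs]; exact hε
      linarith
    have hapos : 0 < a := by linarith
    have hab : r * a ≤ b := by
      calc r * a ≤ r ^ (2 * k + 1) * a := by nlinarith
        _ = b := habs
    nlinarith [pow_le_pow_left₀ (mul_nonneg hr0 ha0) hab 2, mul_pos hapos hapos]
end

section
/- If δ = 0, then L(s, 0) := Σ_{q ≥ 1} λ_q(0) q^{−s} = ζ(2s − 1) for Re(s) > 1, where λ_q(0) = Σ_{q₁² q₂ q₃ = q} μ(q₂) ρ_{q₃}(0) and ρ_q(0) = #{x mod 2q : x² ≡ 0 (mod 4q)}. -/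
open Finset ArithmeticFunction

/-- `λ_q(δ) = Σ_{q₁² q₂ q₃ = q} μ(q₂) ρ_{q₃}(δ)`. -/
def lam (q : ℕ) (δ : ℤ) : ℤ :=
  ∑ t ∈ ((Finset.range (q + 1)) ×ˢ (Finset.range (q + 1)) ×ˢ (Finset.range (q + 1))).filter
      (fun t => t.1 ^ 2 * t.2.1 * t.2.2 = q),
    (moebius t.2.1 : ℤ) * (rho t.2.2 δ : ℤ)

lemma moebius_div_sum (m : ℕ) : ∑ b ∈ m.divisors, (moebius b : ℤ) = if m = 1 then 1 else 0 := by
  have h : (moebius * (zeta : ArithmeticFunction ℤ)) m = (1 : ArithmeticFunction ℤ) m := by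
    rw [moebius_mul_coe_zeta]
  rwa [coe_mul_zeta_apply, one_apply] at h

lemma div_sq_dvd_iff {m y : ℕ} (hm : m ≠ 0) :
    m ∣ y ^ 2 ↔ (m / Nat.gcd y m) ^ 2 ∣ m := by
  have hg : 0 < Nat.gcd y m := Nat.gcd_pos_of_pos_right _ (Nat.pos_of_ne_zero hm)
  set g := Nat.gcd y m with hgdef
  have hgm : g ∣ m := Nat.gcd_dvd_right y m
  have hgy : g ∣ y := Nat.gcd_dvd_left y m
  set d := m / g with hd
  have hmd : m = g * d := (Nat.mul_div_cancel' hgm).symm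
  have hcop : Nat.Coprime (y / g) d := Nat.coprime_div_gcd_div_gcd hg
  obtain ⟨u, hu⟩ := hgy
  have hu' : y / g = u := by rw [hu, Nat.mul_div_cancel_left _ hg]
  constructor
  · intro hdvd
    have h1 : g * d ∣ g * (g * u ^ 2) := by
      rw [← hmd]
      calc m ∣ y ^ 2 := hdvd
        _ = g * (g * u ^ 2) := by rw [hu]; ring
    have h2 : d ∣ g * u ^ 2 := (mul_dvd_mul_iff_left hg.ne').mp h1
    have h3 : Nat.Coprime d (u ^ 2) := by
      rw [← hu']; exact (hcop.symm.pow_right 2)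
    have h4 : d ∣ g := h3.dvd_of_dvd_mul_right h2
    calc d ^ 2 = d * d := sq d
      _ ∣ g * d := mul_dvd_mul_right h4 d
      _ = m := hmd.symm
  · intro hdvd
    have hdpos : 0 < d := Nat.div_pos (Nat.le_of_dvd (Nat.pos_of_ne_zero hm) hgm) hg
    have h1 : d * d ∣ d * g := by
      rw [mul_comm d g, ← hmd, ← sq]; exact hdvd
    have h2 : d ∣ g := (mul_dvd_mul_iff_left hdpos.ne').mp h1
    calc m = g * d := hmd
      _ ∣ g * g := mul_dvd_mul_left g h2
      _ ∣ y ^ 2 := by rw [hu]; exact ⟨u ^ 2, by ring⟩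

lemma count_sq_dvd (m : ℕ) (hm : m ≠ 0) :
    ((range m).filter (fun y => m ∣ y ^ 2)).card
      = ∑ d ∈ m.divisors.filter (fun d => d ^ 2 ∣ m), Nat.totient d := by
  rw [Finset.card_eq_sum_card_fiberwise
    (f := fun y => m / Nat.gcd y m) (t := m.divisors.filter (fun d => d ^ 2 ∣ m)) ?_]
  · refine Finset.sum_congr rfl fun d hd => ?_
    simp only [Finset.mem_filter, Nat.mem_divisors] at hd
    obtain ⟨⟨hdm, _⟩, hd2⟩ := hd
    have hset : ((range m).filter (fun y => m ∣ y ^ 2)).filter (fun a => m / Nat.gcd a m = d)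
        = (range m).filter (fun k => Nat.gcd m k = m / d) := by
      rw [Finset.filter_filter]
      apply Finset.filter_congr
      intro y _
      constructor
      · rintro ⟨hy2, hyd⟩
        rw [Nat.gcd_comm, ← hyd, Nat.div_div_self (Nat.gcd_dvd_right y m) hm]
      · intro hgcd
        have h1 : m / Nat.gcd y m = d := by
          rw [Nat.gcd_comm] at hgcd
          rw [hgcd, Nat.div_div_self hdm hm]
        refine ⟨?_, h1⟩
        rw [div_sq_dvd_iff hm, h1]; exact hd2
    rw [hset, ← Nat.totient_div_of_dvd (Nat.div_dvd_of_dvd hdm), Nat.div_div_self hdm hm]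
  · intro y hy
    simp only [Finset.mem_coe, Finset.mem_filter, Finset.mem_range] at hy ⊢
    refine ⟨Nat.mem_divisors.mpr ⟨Nat.div_dvd_of_dvd (Nat.gcd_dvd_right y m), hm⟩, ?_⟩
    exact (div_sq_dvd_iff hm).mp hy.2


lemma rho_zero_eq (c : ℕ) : rho c 0 = ((range c).filter (fun y => c ∣ y ^ 2)).card := by
  unfold rho
  apply Finset.card_nbij' (i := fun x => x / 2) (j := fun y => 2 * y)
  · intro x hx
    simp only [Finset.mem_coe, Finset.mem_filter, Finset.mem_range] at hx ⊢
    obtain ⟨hxlt, hxmod⟩ := hx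
    have hdvd : ((4 * c : ℕ) : ℤ) ∣ (x : ℤ) ^ 2 := by
      rw [Int.dvd_iff_emod_eq_zero]
      simpa using hxmod
    have hdvd' : (4 * c) ∣ x ^ 2 := by exact_mod_cast hdvd
    have h2x : 2 ∣ x := by
      have : (2 : ℕ) ∣ x ^ 2 := dvd_trans ⟨2 * c, by ring⟩ hdvd'
      exact Nat.Prime.dvd_of_dvd_pow Nat.prime_two this
    obtain ⟨y, rfl⟩ := h2x
    rw [Nat.mul_div_cancel_left _ (by norm_num : 0 < 2)]
    constructor
    · omega
    · have h4 : (4 : ℕ) * c ∣ 4 * y ^ 2 := by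
        convert hdvd' using 1; ring
      exact (mul_dvd_mul_iff_left (by norm_num : (4:ℕ) ≠ 0)).mp h4
  · intro y hy
    simp only [Finset.mem_coe, Finset.mem_filter, Finset.mem_range] at hy ⊢
    obtain ⟨hylt, hydvd⟩ := hy
    constructor
    · omega
    · have : (4 * c) ∣ (2 * y) ^ 2 := by
        obtain ⟨k, hk⟩ := hydvd
        exact ⟨k, by rw [mul_pow]; rw [hk]; ring⟩
      simp only [Int.zero_emod]
      apply Int.emod_eq_zero_of_dvd
      exact_mod_cast Int.natCast_dvd_natCast.mpr this
  · intro x hx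
    simp only [Finset.mem_coe, Finset.mem_filter, Finset.mem_range] at hx
    obtain ⟨hxlt, hxmod⟩ := hx
    have hdvd : ((4 * c : ℕ) : ℤ) ∣ (x : ℤ) ^ 2 := by
      rw [Int.dvd_iff_emod_eq_zero]
      simpa using hxmod
    have hdvd' : (4 * c) ∣ x ^ 2 := by exact_mod_cast hdvd
    have h2x : 2 ∣ x := by
      have : (2 : ℕ) ∣ x ^ 2 := dvd_trans ⟨2 * c, by ring⟩ hdvd'
      exact Nat.Prime.dvd_of_dvd_pow Nat.prime_two this
    show 2 * (x / 2) = x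
    omega
  · intro y hy
    show 2 * y / 2 = y
    omega


lemma rho_eq_sum (c : ℕ) (hc : c ≠ 0) :
    rho c 0 = ∑ d ∈ c.divisors.filter (fun d => d ^ 2 ∣ c), Nat.totient d := by
  rw [rho_zero_eq, count_sq_dvd c hc]

lemma conv_eq (m : ℕ) (hm : m ≠ 0) :
    ∑ r ∈ m.divisorsAntidiagonal, (moebius r.1 : ℤ) * (rho r.2 0 : ℤ)
      = ∑ d ∈ m.divisors, if d ^ 2 = m then (Nat.totient d : ℤ) else 0 := by
  have step1 : ∑ r ∈ m.divisorsAntidiagonal, (moebius r.1 : ℤ) * (rho r.2 0 : ℤ)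
      = ∑ r ∈ m.divisorsAntidiagonal,
          ∑ d ∈ r.2.divisors.filter (fun d => d ^ 2 ∣ r.2), (moebius r.1 : ℤ) * (Nat.totient d : ℤ) := by
    refine Finset.sum_congr rfl fun r hr => ?_
    rw [Nat.mem_divisorsAntidiagonal] at hr
    have hr2 : r.2 ≠ 0 := by
      rintro h; exact hr.2 (by rw [← hr.1, h, mul_zero])
    rw [rho_eq_sum r.2 hr2, ← Finset.mul_sum]
    push_cast
    ring
  rw [step1, Finset.sum_sigma']
  have step2 : ∑ x ∈ m.divisorsAntidiagonal.sigma
        (fun r => r.2.divisors.filter (fun d => d ^ 2 ∣ r.2)),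
        (moebius x.1.1 : ℤ) * (Nat.totient x.2 : ℤ)
      = ∑ x ∈ (m.divisors.filter (fun d => d ^ 2 ∣ m)).sigma
        (fun d => (m / d ^ 2).divisorsAntidiagonal),
        (moebius x.2.1 : ℤ) * (Nat.totient x.1 : ℤ) := by
    apply Finset.sum_nbij' (i := fun x => ⟨x.2, (x.1.1, x.1.2 / x.2 ^ 2)⟩)
      (j := fun x => ⟨(x.2.1, x.1 ^ 2 * x.2.2), x.1⟩)
    · rintro ⟨⟨b, c⟩, d⟩ hx
      simp only [Finset.mem_sigma, Nat.mem_divisorsAntidiagonal, Finset.mem_filter,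
        Nat.mem_divisors] at hx ⊢
      obtain ⟨⟨hbc, _⟩, ⟨hdc, hc0⟩, hd2c⟩ := hx
      have hd2m : d ^ 2 ∣ m := hd2c.trans ⟨b, by rw [← hbc]; ring⟩
      refine ⟨⟨⟨hdc.trans ⟨b, by rw [← hbc]; ring⟩, hm⟩, hd2m⟩, ?_, ?_⟩
      · obtain ⟨e, rfl⟩ := hd2c
        rw [Nat.mul_div_cancel_left e (Nat.pos_of_ne_zero (by rintro h; exact hc0 (by rw [h, zero_mul])))]
        rw [← hbc]
        rw [Nat.mul_comm b (d ^ 2 * e), Nat.mul_assoc, Nat.mul_div_cancel_left _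
          (Nat.pos_of_ne_zero (by rintro h; exact hc0 (by rw [h, zero_mul])))]
        ring
      · have hd0 : d ≠ 0 := fun h => hc0 (zero_dvd_iff.mp (by simpa [h] using hd2c))
        exact (Nat.div_pos (Nat.le_of_dvd (Nat.pos_of_ne_zero hm) hd2m)
          (Nat.pos_of_ne_zero (pow_ne_zero 2 hd0))).ne'
    · rintro ⟨d, b, e⟩ hx
      simp only [Finset.mem_sigma, Nat.mem_divisorsAntidiagonal, Finset.mem_filter,
        Nat.mem_divisors] at hx ⊢
      obtain ⟨⟨⟨hdm, _⟩, hd2m⟩, hbe, hq0⟩ := hx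
      have hval : b * (d ^ 2 * e) = m := by
        rw [show b * (d ^ 2 * e) = d ^ 2 * (b * e) by ring, hbe,
          Nat.mul_div_cancel' hd2m]
      have hne : d ^ 2 * e ≠ 0 := by
        rintro h; exact hm (by rw [← hval, h, mul_zero])
      have hdd : d ∣ d ^ 2 * e := Dvd.dvd.trans (dvd_pow_self d two_ne_zero) ⟨e, rfl⟩
      exact ⟨⟨hval, hm⟩, ⟨hdd, hne⟩, Dvd.dvd.mul_right (dvd_refl _) e⟩
    · rintro ⟨⟨b, c⟩, d⟩ hx
      simp only [Finset.mem_sigma, Nat.mem_divisorsAntidiagonal, Finset.mem_filter,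
        Nat.mem_divisors] at hx
      obtain ⟨⟨hbc, _⟩, ⟨hdc, hc0⟩, hd2c⟩ := hx
      have h1 : d ^ 2 * (c / d ^ 2) = c := Nat.mul_div_cancel' hd2c
      simp [h1]
    · rintro ⟨d, b, e⟩ hx
      simp only [Finset.mem_sigma, Nat.mem_divisorsAntidiagonal, Finset.mem_filter,
        Nat.mem_divisors] at hx
      obtain ⟨⟨⟨hdm, _⟩, hd2m⟩, hbe, hq0⟩ := hx
      have hd0 : d ≠ 0 := by rintro rfl; simp at hq0
      have h1 : d ^ 2 * e / d ^ 2 = e :=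
        Nat.mul_div_cancel_left e (Nat.pos_of_ne_zero (pow_ne_zero 2 hd0))
      simp [h1]
    · rintro ⟨⟨b, c⟩, d⟩ _
      rfl
  rw [step2, Finset.sum_sigma]
  have step3 : ∀ d ∈ m.divisors.filter (fun d => d ^ 2 ∣ m),
      ∑ p ∈ (m / d ^ 2).divisorsAntidiagonal, (moebius p.1 : ℤ) * (Nat.totient d : ℤ)
        = if d ^ 2 = m then (Nat.totient d : ℤ) else 0 := by
    intro d hd
    simp only [Finset.mem_filter, Nat.mem_divisors] at hd
    obtain ⟨⟨hdm, _⟩, hd2m⟩ := hd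
    rw [Nat.sum_divisorsAntidiagonal (f := fun b c => (moebius b : ℤ) * (Nat.totient d : ℤ)),
      ← Finset.sum_mul, moebius_div_sum]
    have : m / d ^ 2 = 1 ↔ d ^ 2 = m := by
      constructor
      · intro h
        have := Nat.eq_mul_of_div_eq_right hd2m h
        omega
      · intro h
        rw [h]; exact Nat.div_self (Nat.pos_of_ne_zero hm)
    by_cases hcase : d ^ 2 = m
    · rw [if_pos (this.mpr hcase), if_pos hcase, one_mul]
    · rw [if_neg (fun h => hcase (this.mp h)), if_neg hcase, zero_mul]
  rw [Finset.sum_congr rfl step3]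
  rw [Finset.sum_filter]
  refine Finset.sum_congr rfl fun d hd => ?_
  by_cases h : d ^ 2 ∣ m
  · rw [if_pos h]
  · rw [if_neg h, if_neg (fun hEq => h hEq.dvd)]


lemma sum_if_sq (v : ℕ) :
    ∑ d ∈ v.divisors, (if d ^ 2 = v then (Nat.totient d : ℤ) else 0)
      = if Nat.sqrt v ^ 2 = v then (Nat.totient (Nat.sqrt v) : ℤ) else 0 := by
  by_cases h : Nat.sqrt v ^ 2 = v
  · rw [if_pos h]
    rcases eq_or_ne v 0 with rfl | hv0
    · simp
    · have hdvd : Nat.sqrt v ∣ v := by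
        have := dvd_pow_self (Nat.sqrt v) two_ne_zero
        rwa [h] at this
      rw [Finset.sum_eq_single_of_mem (Nat.sqrt v) (Nat.mem_divisors.mpr ⟨hdvd, hv0⟩)
        (fun d _ hne => if_neg (fun hdv => hne (by rw [← hdv, Nat.sqrt_eq'])))]
      rw [if_pos h]
  · rw [if_neg h]
    apply Finset.sum_eq_zero
    intro d hd
    rw [if_neg]
    intro hdv
    exact h (by rw [← hdv, Nat.sqrt_eq'])
lemma lam_eq_AD (q : ℕ) (hq : q ≠ 0) :
    lam q 0 = ∑ p ∈ q.divisorsAntidiagonal.filter (fun p => Nat.sqrt p.1 ^ 2 = p.1),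
      ∑ r ∈ p.2.divisorsAntidiagonal, (moebius r.1 : ℤ) * (rho r.2 0 : ℤ) := by
  unfold lam
  rw [Finset.sum_sigma']
  apply Finset.sum_nbij' (i := fun t => ⟨(t.1 ^ 2, t.2.1 * t.2.2), (t.2.1, t.2.2)⟩)
    (j := fun x => (Nat.sqrt x.1.1, x.2.1, x.2.2))
  · rintro ⟨a, b, c⟩ ht
    simp only [Finset.mem_filter, Finset.mem_product, Finset.mem_range,
      Finset.mem_sigma, Nat.mem_divisorsAntidiagonal] at ht ⊢
    obtain ⟨_, habc⟩ := ht
    have hbc : b * c ≠ 0 := by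
      rintro h
      exact hq (by rw [← habc]; rw [mul_assoc, h, mul_zero])
    refine ⟨⟨⟨by rw [← habc]; ring, hq⟩, by rw [Nat.sqrt_eq']⟩, trivial, hbc⟩
  · rintro ⟨⟨u, v⟩, b, c⟩ hx
    simp only [Finset.mem_filter, Finset.mem_product, Finset.mem_range,
      Finset.mem_sigma, Nat.mem_divisorsAntidiagonal] at hx ⊢
    obtain ⟨⟨⟨huv, _⟩, hsq⟩, hbc, hv0⟩ := hx
    have hu0 : u ≠ 0 := by rintro rfl; exact hq (by rw [← huv, zero_mul])
    have huq : u ≤ q := Nat.le_of_dvd (Nat.pos_of_ne_zero hq) ⟨v, huv.symm⟩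
    have hvq : v ≤ q := Nat.le_of_dvd (Nat.pos_of_ne_zero hq) ⟨u, by rw [← huv]; ring⟩
    have hbv : b ≤ v := Nat.le_of_dvd (Nat.pos_of_ne_zero hv0) ⟨c, hbc.symm⟩
    have hcv : c ≤ v := Nat.le_of_dvd (Nat.pos_of_ne_zero hv0) ⟨b, by rw [← hbc]; ring⟩
    have hsu : Nat.sqrt u ≤ u := Nat.sqrt_le_self u
    refine ⟨⟨by omega, by omega, by omega⟩, ?_⟩
    rw [hsq, mul_assoc, hbc, huv]
  · rintro ⟨a, b, c⟩ ht
    simp only [Nat.sqrt_eq']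
  · rintro ⟨⟨u, v⟩, b, c⟩ hx
    simp only [Finset.mem_filter, Finset.mem_sigma, Nat.mem_divisorsAntidiagonal] at hx
    obtain ⟨⟨⟨huv, _⟩, hsq⟩, hbc, hv0⟩ := hx
    simp [hsq, hbc]
  · rintro ⟨a, b, c⟩ _
    rfl

lemma lam_nonsq (q : ℕ) (h : ¬ IsSquare q) : lam q 0 = 0 := by
  have hq : q ≠ 0 := by rintro rfl; exact h ⟨0, rfl⟩
  rw [lam_eq_AD q hq]
  apply Finset.sum_eq_zero
  rintro ⟨u, v⟩ hp
  simp only [Finset.mem_filter, Nat.mem_divisorsAntidiagonal] at hp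
  obtain ⟨⟨huv, _⟩, hsq1⟩ := hp
  have hv0 : v ≠ 0 := by rintro rfl; exact hq (by rw [← huv, mul_zero])
  rw [conv_eq v hv0, sum_if_sq, if_neg]
  intro hsq2
  refine h ⟨Nat.sqrt u * Nat.sqrt v, ?_⟩
  calc q = u * v := huv.symm
    _ = Nat.sqrt u ^ 2 * Nat.sqrt v ^ 2 := by rw [hsq1, hsq2]
    _ = Nat.sqrt u * Nat.sqrt v * (Nat.sqrt u * Nat.sqrt v) := by ring

lemma lam_sq (n : ℕ) (hn : n ≠ 0) : lam (n ^ 2) 0 = (n : ℤ) := by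
  have hq : n ^ 2 ≠ 0 := pow_ne_zero 2 hn
  rw [lam_eq_AD _ hq]
  have step : ∀ p ∈ (n ^ 2).divisorsAntidiagonal.filter (fun p => Nat.sqrt p.1 ^ 2 = p.1),
      ∑ r ∈ p.2.divisorsAntidiagonal, (moebius r.1 : ℤ) * (rho r.2 0 : ℤ)
        = if Nat.sqrt p.2 ^ 2 = p.2 then (Nat.totient (Nat.sqrt p.2) : ℤ) else 0 := by
    intro p hp
    simp only [Finset.mem_filter, Nat.mem_divisorsAntidiagonal] at hp
    have hv0 : p.2 ≠ 0 := by
      rintro h0; exact hq (by rw [← hp.1.1, h0, mul_zero])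
    rw [conv_eq p.2 hv0, sum_if_sq]
  rw [Finset.sum_congr rfl step, ← Finset.sum_filter, Finset.filter_filter]
  have bij : ∑ p ∈ (n ^ 2).divisorsAntidiagonal.filter
        (fun p => Nat.sqrt p.1 ^ 2 = p.1 ∧ Nat.sqrt p.2 ^ 2 = p.2),
        (Nat.totient (Nat.sqrt p.2) : ℤ)
      = ∑ r ∈ n.divisorsAntidiagonal, (Nat.totient r.2 : ℤ) := by
    apply Finset.sum_nbij' (i := fun p => (Nat.sqrt p.1, Nat.sqrt p.2))
      (j := fun r => (r.1 ^ 2, r.2 ^ 2))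
    · rintro ⟨u, v⟩ hp
      simp only [Finset.mem_filter, Nat.mem_divisorsAntidiagonal] at hp ⊢
      obtain ⟨⟨huv, _⟩, hsq1, hsq2⟩ := hp
      refine ⟨?_, hn⟩
      apply Nat.pow_left_injective (n := 2) two_ne_zero
      simp only [mul_pow]
      rw [hsq1, hsq2, huv]
    · rintro ⟨a, k⟩ hr
      simp only [Finset.mem_filter, Nat.mem_divisorsAntidiagonal] at hr ⊢
      obtain ⟨hak, _⟩ := hr
      exact ⟨⟨by rw [← hak]; ring, hq⟩, by rw [Nat.sqrt_eq'], by rw [Nat.sqrt_eq']⟩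
    · rintro ⟨u, v⟩ hp
      simp only [Finset.mem_filter, Nat.mem_divisorsAntidiagonal] at hp
      obtain ⟨_, hsq1, hsq2⟩ := hp
      simp [hsq1, hsq2]
    · rintro ⟨a, k⟩ _
      simp [Nat.sqrt_eq']
    · rintro ⟨u, v⟩ _
      rfl
  rw [bij, Nat.sum_divisorsAntidiagonal' (f := fun _ k => (Nat.totient k : ℤ))]
  rw [← Nat.cast_sum]
  exact_mod_cast congrArg (Nat.cast : ℕ → ℤ) (Nat.sum_totient n)

theorem Ldelta_zero (s : ℂ) (hs : 1 < s.re) :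
    ∑' q : ℕ, (lam q 0 : ℂ) * (q : ℂ) ^ (-s) = riemannZeta (2 * s - 1) := by
  have hs0 : s ≠ 0 := by
    rintro rfl
    simp only [Complex.zero_re] at hs
    linarith
  have hre : (2 * s - 1).re = 2 * s.re - 1 := by
    simp [Complex.sub_re, Complex.mul_re]
  have h2s : 1 < (2 * s - 1).re := by rw [hre]; linarith
  have h2s0 : 2 * s - 1 ≠ 0 := by
    intro h
    rw [h] at h2s
    simp only [Complex.zero_re] at h2s
    linarith
  have hns : -s ≠ 0 := neg_ne_zero.mpr hs0
  have hinj : Function.Injective (fun n : ℕ => n ^ 2) := Nat.pow_left_injective two_ne_zero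
  have hsupp : Function.support (fun q : ℕ => (lam q 0 : ℂ) * (q : ℂ) ^ (-s))
      ⊆ Set.range (fun n : ℕ => n ^ 2) := by
    intro q hqf
    by_contra hq
    apply hqf
    have hnsq : ¬ IsSquare q := by
      rintro ⟨r, rfl⟩
      exact hq ⟨r, by simp [pow_two]⟩
    simp [lam_nonsq q hnsq]
  rw [← Function.Injective.tsum_eq hinj hsupp, zeta_eq_tsum_one_div_nat_cpow h2s]
  apply tsum_congr
  intro n
  rcases eq_or_ne n 0 with rfl | hn
  · simp [Complex.zero_cpow hns, Complex.zero_cpow h2s0]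
  · have hcn : (n : ℂ) ≠ 0 := Nat.cast_ne_zero.mpr hn
    have hval : ((lam ((fun n : ℕ => n ^ 2) n) 0 : ℤ) : ℂ) = (n : ℂ) := by
      rw [lam_sq n hn]; push_cast; rfl
    simp only [hval]
    have hsplit : (((n : ℕ) ^ 2 : ℕ) : ℂ) ^ (-s) = (n : ℂ) ^ (-s) * (n : ℂ) ^ (-s) := by
      have h0 : (0 : ℝ) ≤ (n : ℝ) := Nat.cast_nonneg n
      have := Complex.mul_cpow_ofReal_nonneg h0 h0 (-s)
      push_cast
      rw [pow_two]
      simpa using this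
    rw [hsplit]
    rw [one_div, ← Complex.cpow_neg]
    have e2 : -(2 * s - 1) = 1 + (-s + -s) := by ring
    rw [e2, Complex.cpow_add _ _ hcn, Complex.cpow_add _ _ hcn, Complex.cpow_one]
end
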